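/- arXiv:1712.03869 — 4 statements merged into one kernel-verified Lean document; each statement's English description precedes it below -/
import Mathlib

section
/- Let R and S be finite sets. Then the module L(R,S) is generated by elementary (R,S)-tensors; that is, every element of L(R,S) is a ℤ-linear combination of elementary (R,S)-tensors. -/
open TensorProduct

noncomputable section

/-- The tensor square of the free ℤ-module on `V`, i.e. ℤ⟨V⟩ ⊗ ℤ⟨V⟩. -/
abbrev TT (V : Type*) := (V →₀ ℤ) ⊗[ℤ] (V →₀ ℤ)

/-- The generator of ℤ⟨V⟩ corresponding to `v`. -/
def unitv {V : Type*} (v : V) : V →₀ ℤ := Finsupp.single v 1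

/-- The tensor c(u1u2; v1v2) = (u1 − u2) ⊗ (v1 − v2). -/
def cPair {V : Type*} (u1 u2 v1 v2 : V) : TT V :=
  (unitv u1 - unitv u2) ⊗ₜ[ℤ] (unitv v1 - unitv v2)

/-- The tensor c(u1,u2,u3) = u1⊗u2 − u1⊗u3 + u2⊗u3 − u2⊗u1 + u3⊗u1 − u3⊗u2. -/
def cTriple {V : Type*} (u1 u2 u3 : V) : TT V :=
  unitv u1 ⊗ₜ[ℤ] unitv u2 - unitv u1 ⊗ₜ[ℤ] unitv u3 + unitv u2 ⊗ₜ[ℤ] unitv u3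
    - unitv u2 ⊗ₜ[ℤ] unitv u1 + unitv u3 ⊗ₜ[ℤ] unitv u1 - unitv u3 ⊗ₜ[ℤ] unitv u2

/-- The coefficient c(r⊗s) of an element of ℤ⟨V⟩ ⊗ ℤ⟨V⟩ at the basis element r⊗s. -/
def coeff {V : Type*} (x : TT V) (r s : V) : ℤ := finsuppTensorFinsupp' ℤ V V x (r, s)

/-- A (ab; cd)-linkage in `G`: a pair of vertex-disjoint paths, one connecting `a` and `b`,
the other connecting `c` and `d`. -/
def IsLinkage {V : Type*} (G : SimpleGraph V) (a b c d : V) : Prop :=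
  ∃ (P : G.Walk a b) (Q : G.Walk c d), P.IsPath ∧ Q.IsPath ∧
    ∀ x, x ∈ P.support → x ∉ Q.support

/-- P(G; R, S): the ℤ-span of all ∂P₁ ⊗ ∂P₂ over (R;S)-linkages (P₁,P₂) of `G`.
Note ∂P₁ ⊗ ∂P₂ = (b − a) ⊗ (d − c) = cPair b a d c for a linkage joining a,b ∈ R and
c,d ∈ S; since all endpoint choices and orientations occur, the set below is exactly
the set of these tensors. -/
def PSpan {V : Type*} (G : SimpleGraph V) (R S : Finset V) : Submodule ℤ (TT V) :=
  Submodule.span ℤ {x | ∃ a b c d, a ∈ R ∧ b ∈ R ∧ c ∈ S ∧ d ∈ S ∧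
    IsLinkage G a b c d ∧ x = cPair a b c d}
/-- Membership in L(R,S): coefficients supported on R × S, vanishing on the diagonal,
with all row sums and all column sums zero. -/
def memL {V : Type*} [DecidableEq V] (R S : Finset V) (x : TT V) : Prop :=
  (∀ r s : V, coeff x r s ≠ 0 → r ∈ R ∧ s ∈ S) ∧
  (∀ r ∈ R ∩ S, coeff x r r = 0) ∧
  (∀ s ∈ S, ∑ r ∈ R, coeff x r s = 0) ∧
  (∀ r ∈ R, ∑ s ∈ S, coeff x r s = 0)

/-- The set of elementary (R,S)-tensors: tensors c(u1u2;v1v2) with u1,u2 ∈ R, v1,v2 ∈ S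
and u1,u2,v1,v2 distinct, and tensors c(u1,u2,u3) with u1,u2,u3 ∈ R ∩ S distinct. -/
def elemTensors {V : Type*} [DecidableEq V] (R S : Finset V) : Set (TT V) :=
  {x | (∃ u1 u2 v1 v2 : V, u1 ∈ R ∧ u2 ∈ R ∧ v1 ∈ S ∧ v2 ∈ S ∧
          u1 ≠ u2 ∧ u1 ≠ v1 ∧ u1 ≠ v2 ∧ u2 ≠ v1 ∧ u2 ≠ v2 ∧ v1 ≠ v2 ∧
          x = cPair u1 u2 v1 v2) ∨
       (∃ u1 u2 u3 : V, u1 ∈ R ∩ S ∧ u2 ∈ R ∩ S ∧ u3 ∈ R ∩ S ∧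
          u1 ≠ u2 ∧ u1 ≠ u3 ∧ u2 ≠ u3 ∧ x = cTriple u1 u2 u3)}

namespace Stmt0Aux

variable {V : Type*} [DecidableEq V]

def phi (V : Type*) : TT V ≃ₗ[ℤ] (V × V →₀ ℤ) := finsuppTensorFinsupp' ℤ V V

lemma coeff_eq (x : TT V) (r s : V) : coeff x r s = phi V x (r, s) := rfl

lemma coeff_apply (x : TT V) (p : V × V) : phi V x p = coeff x p.1 p.2 := rfl

lemma phi_sub (x y : TT V) : phi V (x - y) = phi V x - phi V y :=
  (phi V).toLinearMap.map_sub x y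

lemma phi_add (x y : TT V) : phi V (x + y) = phi V x + phi V y :=
  (phi V).toLinearMap.map_add x y

lemma phi_smul (n : ℤ) (x : TT V) : phi V (n • x) = n • phi V x :=
  (phi V).toLinearMap.map_smul n x

lemma coeff_sub (x y : TT V) (r s : V) : coeff (x - y) r s = coeff x r s - coeff y r s := by
  simp [coeff_eq, phi_sub]

lemma coeff_smul (n : ℤ) (x : TT V) (r s : V) : coeff (n • x) r s = n * coeff x r s := by
  simp [coeff_eq, phi_smul]

lemma exists_coeff_ne {x : TT V} (hx : x ≠ 0) : ∃ r s, coeff x r s ≠ 0 := by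
  by_contra hc
  push_neg at hc
  apply hx
  rw [← (phi V).map_eq_zero_iff]
  ext p
  exact hc p.1 p.2

lemma single_pair_apply (a b r s : V) :
    (Finsupp.single ((a, b) : V × V) (1 : ℤ)) (r, s) =
      (if r = a then 1 else 0) * (if s = b then 1 else 0) := by
  by_cases h1 : a = r <;> by_cases h2 : b = s <;>
    simp [Finsupp.single_apply, Prod.ext_iff, h1, h2, eq_comm]

lemma phi_single (a b : V) :
    phi V (Finsupp.single a (1 : ℤ) ⊗ₜ[ℤ] Finsupp.single b (1 : ℤ)) = Finsupp.single (a, b) 1 := by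
  have := finsuppTensorFinsupp'_single_tmul_single (R := ℤ) (a := a) (b := b) (r₁ := (1 : ℤ)) (r₂ := 1)
  rw [one_mul] at this
  exact this

lemma coeff_cPair (u1 u2 v1 v2 r s : V) :
    coeff (cPair u1 u2 v1 v2) r s =
      ((if r = u1 then 1 else 0) - (if r = u2 then 1 else 0)) *
      ((if s = v1 then 1 else 0) - (if s = v2 then 1 else 0)) := by
  simp only [coeff_eq, cPair, unitv, TensorProduct.sub_tmul, TensorProduct.tmul_sub,
    phi_sub, Finsupp.sub_apply]
  simp only [phi_single, single_pair_apply]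
  ring

lemma coeff_cTriple (u1 u2 u3 r s : V) :
    coeff (cTriple u1 u2 u3) r s =
      (if r = u1 then 1 else 0) * (if s = u2 then 1 else 0)
      - (if r = u1 then 1 else 0) * (if s = u3 then 1 else 0)
      + (if r = u2 then 1 else 0) * (if s = u3 then 1 else 0)
      - (if r = u2 then 1 else 0) * (if s = u1 then 1 else 0)
      + (if r = u3 then 1 else 0) * (if s = u1 then 1 else 0)
      - (if r = u3 then 1 else 0) * (if s = u2 then 1 else 0) := by
  simp only [coeff_eq, cTriple, unitv, phi_sub, phi_add, Finsupp.sub_apply, Finsupp.add_apply]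
  simp only [phi_single, single_pair_apply]

end Stmt0Aux
namespace Stmt0Aux

variable {V : Type*} [DecidableEq V]

lemma memL_sub {R S : Finset V} {x y : TT V} (hx : memL R S x) (hy : memL R S y) :
    memL R S (x - y) := by
  obtain ⟨hx1, hx2, hx3, hx4⟩ := hx
  obtain ⟨hy1, hy2, hy3, hy4⟩ := hy
  refine ⟨?_, ?_, ?_, ?_⟩
  · intro r s h
    rw [coeff_sub] at h
    by_cases h1 : coeff x r s = 0
    · exact hy1 r s (by omega)
    · exact hx1 r s h1
  · intro r hr; rw [coeff_sub, hx2 r hr, hy2 r hr]; ring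
  · intro s hs; simp only [coeff_sub, Finset.sum_sub_distrib, hx3 s hs, hy3 s hs]; ring
  · intro r hr; simp only [coeff_sub, Finset.sum_sub_distrib, hx4 r hr, hy4 r hr]; ring

lemma memL_smul {R S : Finset V} {x : TT V} (n : ℤ) (hx : memL R S x) :
    memL R S (n • x) := by
  obtain ⟨hx1, hx2, hx3, hx4⟩ := hx
  refine ⟨?_, ?_, ?_, ?_⟩
  · intro r s h
    rw [coeff_smul] at h
    exact hx1 r s (by intro h0; rw [h0, mul_zero] at h; exact h rfl)
  · intro r hr; rw [coeff_smul, hx2 r hr, mul_zero]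
  · intro s hs; simp only [coeff_smul, ← Finset.mul_sum, hx3 s hs, mul_zero]
  · intro r hr; simp only [coeff_smul, ← Finset.mul_sum, hx4 r hr, mul_zero]

lemma memL_cPair {R S : Finset V} {u1 u2 v1 v2 : V} (hu1 : u1 ∈ R) (hu2 : u2 ∈ R)
    (hv1 : v1 ∈ S) (hv2 : v2 ∈ S) (h12 : u1 ≠ u2) (h11 : u1 ≠ v1) (h12' : u1 ≠ v2)
    (h21 : u2 ≠ v1) (h22 : u2 ≠ v2) (hv : v1 ≠ v2) :
    memL R S (cPair u1 u2 v1 v2) := by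
  refine ⟨?_, ?_, ?_, ?_⟩
  · intro r s h
    rw [coeff_cPair] at h
    constructor
    · by_cases e1 : r = u1
      · exact e1 ▸ hu1
      · by_cases e2 : r = u2
        · exact e2 ▸ hu2
        · simp [e1, e2] at h
    · by_cases e1 : s = v1
      · exact e1 ▸ hv1
      · by_cases e2 : s = v2
        · exact e2 ▸ hv2
        · simp [e1, e2] at h
  · intro r _
    rw [coeff_cPair]
    by_cases e1 : r = u1 <;> by_cases e2 : r = u2 <;>
      subst_vars <;> simp_all <;> split_ifs <;> simp_all
  · intro s _
    simp only [coeff_cPair, ← Finset.sum_mul, Finset.sum_sub_distrib,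
      Finset.sum_ite_eq' R, hu1, hu2, if_pos]
    ring
  · intro r _
    simp only [coeff_cPair, ← Finset.mul_sum, Finset.sum_sub_distrib,
      Finset.sum_ite_eq' S, hv1, hv2, if_pos]
    ring

lemma memL_cTriple {R S : Finset V} {u1 u2 u3 : V} (h1 : u1 ∈ R ∩ S) (h2 : u2 ∈ R ∩ S)
    (h3 : u3 ∈ R ∩ S) (h12 : u1 ≠ u2) (h13 : u1 ≠ u3) (h23 : u2 ≠ u3) :
    memL R S (cTriple u1 u2 u3) := by
  simp only [Finset.mem_inter] at h1 h2 h3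
  refine ⟨?_, ?_, ?_, ?_⟩
  · intro r s h
    rw [coeff_cTriple] at h
    constructor
    · by_cases e1 : r = u1
      · exact e1 ▸ h1.1
      · by_cases e2 : r = u2
        · exact e2 ▸ h2.1
        · by_cases e3 : r = u3
          · exact e3 ▸ h3.1
          · simp [e1, e2, e3] at h
    · by_cases e1 : s = u1
      · exact e1 ▸ h1.2
      · by_cases e2 : s = u2
        · exact e2 ▸ h2.2
        · by_cases e3 : s = u3
          · exact e3 ▸ h3.2
          · simp [e1, e2, e3] at h
  · intro r _
    rw [coeff_cTriple]
    by_cases e1 : r = u1 <;> by_cases e2 : r = u2 <;> by_cases e3 : r = u3 <;>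
      subst_vars <;> simp_all <;> split_ifs <;> simp_all
  · intro s _
    simp only [coeff_cTriple, Finset.sum_add_distrib, Finset.sum_sub_distrib,
      ← Finset.sum_mul, Finset.sum_ite_eq' R, h1.1, h2.1, h3.1, if_pos]
    ring
  · intro r _
    simp only [coeff_cTriple, Finset.sum_add_distrib, Finset.sum_sub_distrib,
      ← Finset.mul_sum, Finset.sum_ite_eq' S, h1.2, h2.2, h3.2, if_pos]
    ring

end Stmt0Aux
namespace Stmt0Aux

variable {V : Type*} [DecidableEq V]

def Nof (f : V × V →₀ ℤ) : ℕ := ∑ p ∈ f.support, (f p).natAbs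

lemma Nof_eq_sum {f : V × V →₀ ℤ} {T : Finset (V × V)} (h : f.support ⊆ T) :
    Nof f = ∑ p ∈ T, (f p).natAbs := by
  refine Finset.sum_subset h ?_
  intro p _ hp
  rw [Finsupp.notMem_support_iff.mp hp]
  rfl

lemma eq_zero_of_Nof {f : V × V →₀ ℤ} (h : Nof f = 0) : f = 0 := by
  ext p
  by_contra hp
  have hfp : f p ≠ 0 := by simpa using hp
  have h0 := Finset.sum_eq_zero_iff.mp h p (Finsupp.mem_support_iff.mpr hfp)
  omega

lemma Nof_sub_lt {f g : V × V →₀ ℤ} {T : Finset (V × V)} (hg : g.support ⊆ T)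
    (h : ∑ p ∈ T, (f p - g p).natAbs < ∑ p ∈ T, (f p).natAbs) :
    Nof (f - g) < Nof f := by
  set T' := f.support ∪ T with hT'
  have h1 : f.support ⊆ T' := Finset.subset_union_left
  have h2 : (f - g).support ⊆ T' := by
    intro p hp
    rw [Finsupp.mem_support_iff] at hp
    by_cases hf : p ∈ f.support
    · exact h1 hf
    · refine Finset.mem_union_right _ (hg ?_)
      rw [Finsupp.mem_support_iff]
      rw [Finsupp.notMem_support_iff] at hf
      intro h0
      apply hp
      simp [Finsupp.sub_apply, hf, h0]
  have h3 : T ⊆ T' := Finset.subset_union_right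
  rw [Nof_eq_sum h1, Nof_eq_sum h2]
  rw [← Finset.sum_sdiff h3, ← Finset.sum_sdiff h3]
  have h4 : ∀ p ∈ T' \ T, ((f - g) p).natAbs = (f p).natAbs := by
    intro p hp
    have : g p = 0 := by
      rw [← Finsupp.notMem_support_iff]
      intro hgp
      exact (Finset.mem_sdiff.mp hp).2 (hg hgp)
    simp [Finsupp.sub_apply, this]
  rw [Finset.sum_congr rfl h4]
  have h5 : ∑ p ∈ T, ((f - g) p).natAbs < ∑ p ∈ T, (f p).natAbs := by
    simpa [Finsupp.sub_apply] using h
  omega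

lemma exists_neg {A : Finset V} {h : V → ℤ} {ε : ℤ} {a : V} (ha : a ∈ A)
    (hsum : ∑ v ∈ A, h v = 0) (hpos : 0 < ε * h a) :
    ∃ b ∈ A, b ≠ a ∧ ε * h b < 0 := by
  by_contra hc
  push_neg at hc
  have hs : ∑ v ∈ A, ε * h v = 0 := by rw [← Finset.mul_sum, hsum, mul_zero]
  rw [← Finset.add_sum_erase _ _ ha] at hs
  have hnn : 0 ≤ ∑ v ∈ A.erase a, ε * h v := by
    refine Finset.sum_nonneg fun v hv => ?_
    exact hc v (Finset.mem_of_mem_erase hv) (Finset.ne_of_mem_erase hv)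
  omega

lemma span_step {R S : Finset V} {x e : TT V} (he : e ∈ elemTensors R S) (ε : ℤ)
    (h : x - ε • e ∈ Submodule.span ℤ (elemTensors R S)) :
    x ∈ Submodule.span ℤ (elemTensors R S) := by
  have h2 := Submodule.add_mem _ (Submodule.smul_mem _ ε (Submodule.subset_span he)) h
  have h3 : ε • e + (x - ε • e) = x := by abel
  rwa [h3] at h2

end Stmt0Aux
namespace Stmt0Aux

variable {V : Type*} [DecidableEq V]

/-- Goal-shaped conclusion of each reduction step. -/
def Step (R S : Finset V) (x : TT V) : Prop :=
  ∃ e ∈ elemTensors R S, ∃ ε : ℤ,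
    memL R S (x - ε • e) ∧ Nof (phi V (x - ε • e)) < Nof (phi V x)

lemma pair_case {R S : Finset V} {x : TT V} {a b c d : V} {ε : ℤ}
    (hx : memL R S x)
    (ha : a ∈ R) (hb : b ∈ R) (hc : c ∈ S) (hd : d ∈ S)
    (hab : a ≠ b) (hac : a ≠ c) (had : a ≠ d) (hbc : b ≠ c) (hbd : b ≠ d) (hcd : c ≠ d)
    (hε : ε = 1 ∨ ε = -1)
    (s1 : 0 < ε * coeff x a c) (s2 : ε * coeff x a d < 0) (s3 : ε * coeff x b c < 0) :
    Step R S x := by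
  set e : TT V := cPair a b c d with he_def
  have he : e ∈ elemTensors R S :=
    Or.inl ⟨a, b, c, d, ha, hb, hc, hd, hab, hac, had, hbc, hbd, hcd, rfl⟩
  have hmemL : memL R S (x - ε • e) :=
    memL_sub hx (memL_smul ε (memL_cPair ha hb hc hd hab hac had hbc hbd hcd))
  refine ⟨e, he, ε, hmemL, ?_⟩
  set T : Finset (V × V) := {(a, c), (a, d), (b, c), (b, d)} with hT_def
  have hT4 : ∀ fn : V × V → ℕ,
      ∑ p ∈ T, fn p = fn (a, c) + fn (a, d) + fn (b, c) + fn (b, d) := by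
    intro fn
    rw [hT_def]
    rw [Finset.sum_insert (by simp [Prod.ext_iff]; tauto),
      Finset.sum_insert (by simp [Prod.ext_iff]; tauto),
      Finset.sum_insert (by simp [Prod.ext_iff]; tauto),
      Finset.sum_singleton]
    ring
  have hg : (phi V (ε • e)).support ⊆ T := by
    intro p hp
    rw [Finsupp.mem_support_iff, coeff_apply, coeff_smul, he_def, coeff_cPair] at hp
    rw [hT_def]
    by_cases e1 : p.1 = a <;> by_cases e2 : p.1 = b <;> by_cases e3 : p.2 = c <;>
      by_cases e4 : p.2 = d <;>
      simp [e1, e2, e3, e4, Finset.mem_insert, Prod.ext_iff] at hp ⊢ <;> tauto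
  have gac : phi V (ε • e) (a, c) = ε := by
    rw [coeff_apply, coeff_smul, he_def, coeff_cPair]; simp [hab, hcd]
  have gad : phi V (ε • e) (a, d) = -ε := by
    rw [coeff_apply, coeff_smul, he_def, coeff_cPair]; simp [hab, hcd.symm]
  have gbc : phi V (ε • e) (b, c) = -ε := by
    rw [coeff_apply, coeff_smul, he_def, coeff_cPair]; simp [hab.symm, hcd]
  have gbd : phi V (ε • e) (b, d) = ε := by
    rw [coeff_apply, coeff_smul, he_def, coeff_cPair]; simp [hab.symm, hcd.symm]
  rw [phi_sub]
  refine Nof_sub_lt hg ?_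
  rw [hT4, hT4]
  simp only [gac, gad, gbc, gbd, coeff_apply]
  rcases hε with rfl | rfl <;> omega

end Stmt0Aux
namespace Stmt0Aux

variable {V : Type*} [DecidableEq V]

lemma pair_case' {R S : Finset V} {x : TT V} {a b c d : V} {ε : ℤ}
    (hx : memL R S x)
    (ha : a ∈ R) (hb : b ∈ R) (hc : c ∈ S) (hd : d ∈ S)
    (hab : a ≠ b) (hac : a ≠ c) (had : a ≠ d) (hbc : b ≠ c) (hbd : b ≠ d) (hcd : c ≠ d)
    (hε : ε = 1 ∨ ε = -1)
    (s1 : 0 < ε * coeff x a c) (s2 : ε * coeff x b c < 0) (s3 : 0 < ε * coeff x b d) :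
    Step R S x := by
  set e : TT V := cPair a b c d with he_def
  have he : e ∈ elemTensors R S :=
    Or.inl ⟨a, b, c, d, ha, hb, hc, hd, hab, hac, had, hbc, hbd, hcd, rfl⟩
  have hmemL : memL R S (x - ε • e) :=
    memL_sub hx (memL_smul ε (memL_cPair ha hb hc hd hab hac had hbc hbd hcd))
  refine ⟨e, he, ε, hmemL, ?_⟩
  set T : Finset (V × V) := {(a, c), (a, d), (b, c), (b, d)} with hT_def
  have hT4 : ∀ fn : V × V → ℕ,
      ∑ p ∈ T, fn p = fn (a, c) + fn (a, d) + fn (b, c) + fn (b, d) := by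
    intro fn
    rw [hT_def]
    rw [Finset.sum_insert (by simp [Prod.ext_iff]; tauto),
      Finset.sum_insert (by simp [Prod.ext_iff]; tauto),
      Finset.sum_insert (by simp [Prod.ext_iff]; tauto),
      Finset.sum_singleton]
    ring
  have hg : (phi V (ε • e)).support ⊆ T := by
    intro p hp
    rw [Finsupp.mem_support_iff, coeff_apply, coeff_smul, he_def, coeff_cPair] at hp
    rw [hT_def]
    by_cases e1 : p.1 = a <;> by_cases e2 : p.1 = b <;> by_cases e3 : p.2 = c <;>
      by_cases e4 : p.2 = d <;>
      simp [e1, e2, e3, e4, Finset.mem_insert, Prod.ext_iff] at hp ⊢ <;> tauto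
  have gac : phi V (ε • e) (a, c) = ε := by
    rw [coeff_apply, coeff_smul, he_def, coeff_cPair]; simp [hab, hcd]
  have gad : phi V (ε • e) (a, d) = -ε := by
    rw [coeff_apply, coeff_smul, he_def, coeff_cPair]; simp [hab, hcd.symm]
  have gbc : phi V (ε • e) (b, c) = -ε := by
    rw [coeff_apply, coeff_smul, he_def, coeff_cPair]; simp [hab.symm, hcd]
  have gbd : phi V (ε • e) (b, d) = ε := by
    rw [coeff_apply, coeff_smul, he_def, coeff_cPair]; simp [hab.symm, hcd.symm]
  rw [phi_sub]
  refine Nof_sub_lt hg ?_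
  rw [hT4, hT4]
  simp only [gac, gad, gbc, gbd, coeff_apply]
  rcases hε with rfl | rfl <;> omega

set_option maxHeartbeats 2000000 in
lemma triple_case {R S : Finset V} {x : TT V} {a b c : V} {ε : ℤ}
    (hx : memL R S x)
    (ha : a ∈ R ∩ S) (hb : b ∈ R ∩ S) (hc : c ∈ R ∩ S)
    (hab : a ≠ b) (hac : a ≠ c) (hbc : b ≠ c)
    (hε : ε = 1 ∨ ε = -1)
    (s1 : 0 < ε * coeff x a b) (s2 : ε * coeff x a c < 0) (s3 : 0 < ε * coeff x b c)
    (s4 : 0 < ε * coeff x c a) (s5 : ε * coeff x c b < 0) :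
    Step R S x := by
  set e : TT V := cTriple a b c with he_def
  have he : e ∈ elemTensors R S :=
    Or.inr ⟨a, b, c, ha, hb, hc, hab, hac, hbc, rfl⟩
  have hmemL : memL R S (x - ε • e) :=
    memL_sub hx (memL_smul ε (memL_cTriple ha hb hc hab hac hbc))
  refine ⟨e, he, ε, hmemL, ?_⟩
  set T : Finset (V × V) := {(a, b), (a, c), (b, a), (b, c), (c, a), (c, b)} with hT_def
  have hT6 : ∀ fn : V × V → ℕ,
      ∑ p ∈ T, fn p = fn (a, b) + fn (a, c) + fn (b, a) + fn (b, c) + fn (c, a) + fn (c, b) := by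
    intro fn
    rw [hT_def]
    rw [Finset.sum_insert (by simp [Prod.ext_iff]; tauto),
      Finset.sum_insert (by simp [Prod.ext_iff]; tauto),
      Finset.sum_insert (by simp [Prod.ext_iff]; tauto),
      Finset.sum_insert (by simp [Prod.ext_iff]; tauto),
      Finset.sum_insert (by simp [Prod.ext_iff]; tauto),
      Finset.sum_singleton]
    ring
  have hg : (phi V (ε • e)).support ⊆ T := by
    intro p hp
    rw [Finsupp.mem_support_iff, coeff_apply, coeff_smul, he_def, coeff_cTriple] at hp
    rw [hT_def]
    have h1 : p.1 = a ∨ p.1 = b ∨ p.1 = c := by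
      by_contra hcon
      push_neg at hcon
      obtain ⟨n1, n2, n3⟩ := hcon
      exact hp (by simp [n1, n2, n3])
    have h2 : p.2 = a ∨ p.2 = b ∨ p.2 = c := by
      by_contra hcon
      push_neg at hcon
      obtain ⟨n1, n2, n3⟩ := hcon
      exact hp (by simp [n1, n2, n3])
    rcases h1 with e1 | e1 | e1 <;> rcases h2 with e2 | e2 | e2 <;>
      simp [e1, e2, hab, hac, hbc, Ne.symm hab, Ne.symm hac, Ne.symm hbc,
        Finset.mem_insert, Finset.mem_singleton, Prod.ext_iff] at hp ⊢
  have gab : phi V (ε • e) (a, b) = ε := by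
    rw [coeff_apply, coeff_smul, he_def, coeff_cTriple]
    simp [hab, hac, hbc, hab.symm, hac.symm, hbc.symm]
  have gac : phi V (ε • e) (a, c) = -ε := by
    rw [coeff_apply, coeff_smul, he_def, coeff_cTriple]
    simp [hab, hac, hbc, hab.symm, hac.symm, hbc.symm]
  have gba : phi V (ε • e) (b, a) = -ε := by
    rw [coeff_apply, coeff_smul, he_def, coeff_cTriple]
    simp [hab, hac, hbc, hab.symm, hac.symm, hbc.symm]
  have gbc' : phi V (ε • e) (b, c) = ε := by
    rw [coeff_apply, coeff_smul, he_def, coeff_cTriple]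
    simp [hab, hac, hbc, hab.symm, hac.symm, hbc.symm]
  have gca : phi V (ε • e) (c, a) = ε := by
    rw [coeff_apply, coeff_smul, he_def, coeff_cTriple]
    simp [hab, hac, hbc, hab.symm, hac.symm, hbc.symm]
  have gcb : phi V (ε • e) (c, b) = -ε := by
    rw [coeff_apply, coeff_smul, he_def, coeff_cTriple]
    simp [hab, hac, hbc, hab.symm, hac.symm, hbc.symm]
  rw [phi_sub]
  refine Nof_sub_lt hg ?_
  rw [hT6, hT6]
  simp only [gab, gac, gba, gbc', gca, gcb, coeff_apply]
  rcases hε with rfl | rfl <;> omega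

end Stmt0Aux
namespace Stmt0Aux

variable {V : Type*} [DecidableEq V]

lemma key {R S : Finset V} {x : TT V} (hx : memL R S x) (hx0 : x ≠ 0) : Step R S x := by
  obtain ⟨hsupp, hdiag, hcol, hrow⟩ := hx
  have hxfull : memL R S x := ⟨hsupp, hdiag, hcol, hrow⟩
  have diag_ne : ∀ u v : V, coeff x u v ≠ 0 → u ≠ v := by
    intro u v h hne
    subst hne
    exact h (hdiag u (Finset.mem_inter.mpr ⟨(hsupp u u h).1, (hsupp u u h).2⟩))
  obtain ⟨r, s, hrs⟩ := exists_coeff_ne hx0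
  set ε : ℤ := if 0 < coeff x r s then 1 else -1 with hεdef
  have hε : ε = 1 ∨ ε = -1 := by rw [hεdef]; split_ifs <;> simp
  have hpos : 0 < ε * coeff x r s := by
    rw [hεdef]; split_ifs with h <;> [omega; (have := lt_of_le_of_ne (not_lt.mp h) hrs; omega)]
  have hrR : r ∈ R := (hsupp r s hrs).1
  have hsS : s ∈ S := (hsupp r s hrs).2
  have hrs_ne : r ≠ s := diag_ne r s hrs
  obtain ⟨r', hr'R, hr'ne, hr'neg⟩ :=
    exists_neg (h := fun v => coeff x v s) (ε := ε) hrR (hcol s hsS) hpos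
  obtain ⟨s', hs'S, hs'ne, hs'neg⟩ :=
    exists_neg (h := fun v => coeff x r v) (ε := ε) hsS (hrow r hrR) hpos
  by_cases hA : ∃ r'' s'', r'' ∈ R ∧ s'' ∈ S ∧ r'' ≠ r ∧ s'' ≠ s ∧
      ε * coeff x r'' s < 0 ∧ ε * coeff x r s'' < 0 ∧ r'' ≠ s''
  · obtain ⟨r'', s'', h1, h2, h3, h4, h5, h6, h7⟩ := hA
    have hne5 : coeff x r'' s ≠ 0 := by intro h0; rw [h0] at h5; simp at h5
    have hne6 : coeff x r s'' ≠ 0 := by intro h0; rw [h0] at h6; simp at h6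
    exact pair_case hxfull hrR h1 hsS h2 (Ne.symm h3) hrs_ne (diag_ne r s'' hne6)
      (diag_ne r'' s hne5) h7 (Ne.symm h4) hε hpos h6 h5
  · -- the two "bad" witnesses coincide : call it t
    have ht : r' = s' := by
      by_contra hne
      exact hA ⟨r', s', hr'R, hs'S, hr'ne, hs'ne, hr'neg, hs'neg, hne⟩
    subst ht
    set t := r' with htdef
    have htS : t ∈ S := hs'S
    have htR : t ∈ R := hr'R
    have hts_ne : t ≠ s := diag_ne t s (by intro h0; rw [h0] at hr'neg; simp at hr'neg)
    have hrt_ne : r ≠ t := diag_ne r t (by intro h0; rw [h0] at hs'neg; simp at hs'neg)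
    -- column t : find r'' with ε * coeff x r'' t > 0
    have hnegε : (-ε) = 1 ∨ (-ε) = -1 := by omega
    obtain ⟨r'', hr''R, hr''ne, hr''⟩ :=
      exists_neg (h := fun v => coeff x v t) (ε := -ε) hrR (hcol t htS) (by linarith)
    have hr''pos : 0 < ε * coeff x r'' t := by linarith
    have hr''t_ne : r'' ≠ t := diag_ne r'' t (by intro h0; rw [h0] at hr''pos; simp at hr''pos)
    by_cases hB : r'' ≠ s
    · exact pair_case' hxfull hr''R hrR htS hsS hr''ne hr''t_ne hB hrt_ne hrs_ne
        hts_ne hε hr''pos hs'neg hpos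
    · push_neg at hB
      have hsR : s ∈ R := hB ▸ hr''R
      have hst_pos : 0 < ε * coeff x s t := hB ▸ hr''pos
      -- now ε * coeff x s t > 0 (renaming: r'' = s), so s ∈ R
      -- row t : find s'' with ε * coeff x t s'' > 0
      obtain ⟨s'', hs''S, hs''ne, hs''⟩ :=
        exists_neg (h := fun v => coeff x t v) (ε := -ε) hsS (hrow t htR) (by linarith)
      have hs''pos : 0 < ε * coeff x t s'' := by linarith
      have hts''_ne : t ≠ s'' := diag_ne t s'' (by intro h0; rw [h0] at hs''pos; simp at hs''pos)
      by_cases hC : s'' ≠ r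
      · exact pair_case' hxfull hrR htR hsS hs''S hrt_ne hrs_ne (Ne.symm hC) hts_ne hts''_ne
          (Ne.symm hs''ne) hε hpos hr'neg hs''pos
      · push_neg at hC
        have hrS : r ∈ S := hC ▸ hs''S
        have htr_pos : 0 < ε * coeff x t r := hC ▸ hs''pos
        -- triple case with (a, b, c) = (r, s, t)
        have hrRS : r ∈ R ∩ S := Finset.mem_inter.mpr ⟨hrR, hrS⟩
        have hsRS : s ∈ R ∩ S := Finset.mem_inter.mpr ⟨hsR, hsS⟩
        have htRS : t ∈ R ∩ S := Finset.mem_inter.mpr ⟨htR, htS⟩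
        exact triple_case hxfull hrRS hsRS htRS hrs_ne hrt_ne (Ne.symm hts_ne) hε
          hpos hs'neg hst_pos htr_pos hr'neg

lemma main_aux (R S : Finset V) (n : ℕ) :
    ∀ x : TT V, memL R S x → Nof (phi V x) ≤ n → x ∈ Submodule.span ℤ (elemTensors R S) := by
  induction n with
  | zero =>
    intro x _ hn
    have h0 : phi V x = 0 := eq_zero_of_Nof (Nat.le_zero.mp hn)
    have : x = 0 := (phi V).map_eq_zero_iff.mp h0
    rw [this]
    exact Submodule.zero_mem _
  | succ n ih =>
    intro x hx hn
    by_cases h0 : x = 0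
    · rw [h0]; exact Submodule.zero_mem _
    · obtain ⟨e, he, ε, hm, hlt⟩ := key hx h0
      exact span_step he ε (ih _ hm (by omega))

end Stmt0Aux

theorem stmt0 {V : Type*} [DecidableEq V] (R S : Finset V) (x : TT V)
    (hx : memL R S x) : x ∈ Submodule.span ℤ (elemTensors R S) :=
  Stmt0Aux.main_aux R S (Stmt0Aux.Nof (Stmt0Aux.phi V x)) x hx le_rfl
end
end

section
/- Let G = (V,E) be a finite undirected graph, let R, S ⊆ V, let u1, u2, u ∈ R and v1, v2, v ∈ S. If G contains a (u1u;v1v2)-linkage, a (uu2;vv1)-linkage, and a (u2u;v2v)-linkage, then c(u1u2;v1v2) ∈ P(G;R,S). -/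
open TensorProduct

noncomputable section

theorem TensorProduct.sub_tmul_sub_decompose {R M N : Type*} [CommRing R]
    [AddCommGroup M] [Module R M] [AddCommGroup N] [Module R N] (x₁ x₂ x : M) (y₁ y₂ y : N) :
    (x₁ - x₂) ⊗ₜ[R] (y₁ - y₂) =
      (x₁ - x) ⊗ₜ (y₁ - y₂) - (x - x₂) ⊗ₜ (y - y₁) + (x₂ - x) ⊗ₜ (y₂ - y) := by
  simp only [sub_tmul, tmul_sub]
  abel

theorem cPair_decompose {V : Type*} (u1 u2 u v1 v2 v : V) :
    cPair u1 u2 v1 v2 = cPair u1 u v1 v2 - cPair u u2 v v1 + cPair u2 u v2 v :=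
  TensorProduct.sub_tmul_sub_decompose _ _ _ _ _ _

theorem cPair_mem_PSpan {V : Type*} {G : SimpleGraph V} {R S : Finset V} {a b c d : V}
    (ha : a ∈ R) (hb : b ∈ R) (hc : c ∈ S) (hd : d ∈ S) (h : IsLinkage G a b c d) :
    cPair a b c d ∈ PSpan G R S :=
  Submodule.subset_span ⟨a, b, c, d, ha, hb, hc, hd, h, rfl⟩

theorem stmt2_general {V : Type*} (G : SimpleGraph V) (R S : Finset V)
    (u1 u2 u v1 v2 v : V)
    (hu1 : u1 ∈ R) (hu2 : u2 ∈ R) (hu : u ∈ R)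
    (hv1 : v1 ∈ S) (hv2 : v2 ∈ S) (hv : v ∈ S)
    (h1 : IsLinkage G u1 u v1 v2) (h2 : IsLinkage G u u2 v v1)
    (h3 : IsLinkage G u2 u v2 v) :
    cPair u1 u2 v1 v2 ∈ PSpan G R S := by
  rw [cPair_decompose u1 u2 u v1 v2 v]
  exact add_mem (sub_mem (cPair_mem_PSpan hu1 hu hv1 hv2 h1) (cPair_mem_PSpan hu hu2 hv hv1 h2))
    (cPair_mem_PSpan hu2 hu hv2 hv h3)

theorem stmt2 {V : Type*} [Fintype V] (G : SimpleGraph V) (R S : Finset V)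
    (u1 u2 u v1 v2 v : V)
    (hu1 : u1 ∈ R) (hu2 : u2 ∈ R) (hu : u ∈ R)
    (hv1 : v1 ∈ S) (hv2 : v2 ∈ S) (hv : v ∈ S)
    (h1 : IsLinkage G u1 u v1 v2) (h2 : IsLinkage G u u2 v v1)
    (h3 : IsLinkage G u2 u v2 v) :
    cPair u1 u2 v1 v2 ∈ PSpan G R S :=
  stmt2_general G R S u1 u2 u v1 v2 v hu1 hu2 hu hv1 hv2 hv h1 h2 h3
end
end

section
/- Let G = (V,E) be a finite undirected graph, let R, S ⊆ V, let u1, u2, u ∈ R and v1, v2, v', v'' ∈ S. If G contains a (u2u1;v'v1)-linkage, a (uu2;v'v2)-linkage, a (uu1;v'v1)-linkage, a (uu1;v''v2)-linkage, and a (uu1;v''v1)-linkage, then c(u1u2;v1v2) ∈ P(G;R,S). -/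
open TensorProduct

noncomputable section

/-- The three `v'` terms sum to `c(u u₂; v₁v₂)` and the two `v''` terms to `c(u₁u; v₁v₂)`. -/
theorem cPair_eq_five_term {V : Type*} (u1 u2 u v1 v2 v' v'' : V) :
    cPair u1 u2 v1 v2 =
      cPair u2 u1 v' v1 + cPair u u2 v' v2 - cPair u u1 v' v1
        - cPair u u1 v'' v2 + cPair u u1 v'' v1 := by
  simp only [cPair, sub_tmul, tmul_sub]
  abel

theorem stmt3_general {V : Type*} (G : SimpleGraph V) (R S : Finset V)
    (u1 u2 u v1 v2 v' v'' : V)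
    (hu1 : u1 ∈ R) (hu2 : u2 ∈ R) (hu : u ∈ R)
    (hv1 : v1 ∈ S) (hv2 : v2 ∈ S) (hv' : v' ∈ S) (hv'' : v'' ∈ S)
    (h1 : IsLinkage G u2 u1 v' v1) (h2 : IsLinkage G u u2 v' v2)
    (h3 : IsLinkage G u u1 v' v1) (h4 : IsLinkage G u u1 v'' v2)
    (h5 : IsLinkage G u u1 v'' v1) :
    cPair u1 u2 v1 v2 ∈ PSpan G R S := by
  rw [cPair_eq_five_term u1 u2 u v1 v2 v' v'']
  refine add_mem (sub_mem (sub_mem (add_mem ?_ ?_) ?_) ?_) ?_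
  · exact cPair_mem_PSpan hu2 hu1 hv' hv1 h1
  · exact cPair_mem_PSpan hu hu2 hv' hv2 h2
  · exact cPair_mem_PSpan hu hu1 hv' hv1 h3
  · exact cPair_mem_PSpan hu hu1 hv'' hv2 h4
  · exact cPair_mem_PSpan hu hu1 hv'' hv1 h5

theorem stmt3 {V : Type*} [Fintype V] (G : SimpleGraph V) (R S : Finset V)
    (u1 u2 u v1 v2 v' v'' : V)
    (hu1 : u1 ∈ R) (hu2 : u2 ∈ R) (hu : u ∈ R)
    (hv1 : v1 ∈ S) (hv2 : v2 ∈ S) (hv' : v' ∈ S) (hv'' : v'' ∈ S)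
    (h1 : IsLinkage G u2 u1 v' v1) (h2 : IsLinkage G u u2 v' v2)
    (h3 : IsLinkage G u u1 v' v1) (h4 : IsLinkage G u u1 v'' v2)
    (h5 : IsLinkage G u u1 v'' v1) :
    cPair u1 u2 v1 v2 ∈ PSpan G R S :=
  stmt3_general G R S u1 u2 u v1 v2 v' v'' hu1 hu2 hu hv1 hv2 hv' hv'' h1 h2 h3 h4 h5
end
end

section
/- Let G = (V,E) be a finite 2-connected undirected graph and let R, S ⊆ V, where R∪S has at least four vertices. Let u1, u2, u3 ∈ R∩S be distinct vertices and suppose c(u1,u2,u3) ∉ P(G;R,S). Then there exist distinct vertices u4, u5 ∈ R and distinct vertices v1, v2 ∈ S such that c(u4u5;v1v2) ∉ P(G;R,S) and c(u1,u2,u3) + c(u4u5;v1v2) ∈ P(G;R,S). -/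
open TensorProduct

noncomputable section

/-- A finite graph is 2-connected if it has at least 3 vertices and deleting any single
vertex leaves a connected graph. -/
def TwoConnected {V : Type*} [Fintype V] (G : SimpleGraph V) : Prop :=
  3 ≤ Fintype.card V ∧ ∀ v : V, (G.induce ({v}ᶜ : Set V)).Connected


section Algebra

lemma cTriple_rot {V : Type*} (a b c : V) : cTriple a b c = cTriple b c a := by
  unfold cTriple; abel

lemma A1 {V : Type*} (a b c w : V) :
    cTriple a b c + cPair a b c w = cPair a c b w - cPair b c a w := by
  simp only [cTriple, cPair, TensorProduct.sub_tmul, TensorProduct.tmul_sub]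
  abel

lemma A2 {V : Type*} (a b c w : V) :
    cTriple a b c + cPair c w b a = cPair a w b c - cPair b w a c := by
  simp only [cTriple, cPair, TensorProduct.sub_tmul, TensorProduct.tmul_sub]
  abel

end Algebra


open SimpleGraph Walk

section WalkUtils

variable {V : Type*} [DecidableEq V] {H : SimpleGraph V}

/-- From connectivity of `H - v`, get a path avoiding `v`. -/
lemma avoid_path {v : V} (hconn : (H.induce ({v}ᶜ : Set V)).Connected) {a b : V}
    (ha : a ≠ v) (hb : b ≠ v) :
    ∃ p : H.Walk a b, p.IsPath ∧ v ∉ p.support := by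
  obtain ⟨w⟩ := hconn.preconnected ⟨a, by simp [ha]⟩ ⟨b, by simp [hb]⟩
  let f := SimpleGraph.Embedding.induce (G := H) ({v}ᶜ : Set V)
  refine ⟨((w.map f.toHom : H.Walk a b)).bypass, Walk.bypass_isPath _, fun hv => ?_⟩
  have hv' := Walk.support_bypass_subset _ hv
  erw [Walk.support_map] at hv'
  obtain ⟨x, _, hx2⟩ := List.mem_map.mp hv'
  have hxv : (x : V) = v := hx2
  have hx3 := x.2
  simp only [Set.mem_compl_iff, Set.mem_singleton_iff] at hx3
  exact hx3 hxv

omit [DecidableEq V] in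
/-- First hit of a path in a set containing its endpoint. -/
lemma exists_firstHit (C : Set V) :
    ∀ {x a : V} (Q : H.Walk x a), Q.IsPath → a ∈ C →
      ∃ z, z ∈ C ∧ ∃ Q0 : H.Walk x z, Q0.IsPath ∧ Q0.support ⊆ Q.support ∧
        ∀ y ∈ Q0.support, y ∈ C → y = z
  | x, _, Walk.nil, _, ha =>
      ⟨x, ha, Walk.nil, Walk.IsPath.nil, by simp, by intro y hy _; simpa using hy⟩
  | x, a, Walk.cons hadj rest, hQ, ha => by
      by_cases hu : x ∈ C
      · exact ⟨x, hu, Walk.nil, Walk.IsPath.nil, by simp,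
          by intro y hy _; simpa using hy⟩
      · obtain ⟨z, hz, Q0, h1, h2, h3⟩ := exists_firstHit C rest hQ.of_cons ha
        have huQ0 : x ∉ Q0.support := fun h => ((Walk.cons_isPath_iff _ _).mp hQ).2 (h2 h)
        refine ⟨z, hz, Walk.cons hadj Q0, h1.cons huQ0, ?_, ?_⟩
        · intro y hy
          rw [Walk.support_cons] at hy ⊢
          rcases List.mem_cons.mp hy with h | h
          · simp [h]
          · exact List.mem_cons_of_mem _ (h2 h)
        · intro y hy hyC
          rw [Walk.support_cons] at hy
          rcases List.mem_cons.mp hy with h | h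
          · exact absurd (h ▸ hyC) hu
          · exact h3 y h hyC

/-- If the end of a path occurs in `takeUntil`, it must be the cut vertex. -/
lemma end_eq_of_mem_takeUntil {a b z : V} {p : H.Walk a b} (hp : p.IsPath)
    (hz : z ∈ p.support) (hb : b ∈ (p.takeUntil z hz).support) : b = z := by
  by_contra hne
  have hsupp : p.support = (p.takeUntil z hz).support ++ (p.dropUntil z hz).support.tail := by
    conv_lhs => rw [← p.take_spec hz]
    exact Walk.support_append _ _
  have hnodup := hp.support_nodup
  rw [hsupp] at hnodup
  have hbd : b ∈ (p.dropUntil z hz).support := Walk.end_mem_support _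
  rw [Walk.support_eq_cons] at hbd
  rcases List.mem_cons.mp hbd with h | h
  · exact hne h
  · exact (List.disjoint_of_nodup_append hnodup) hb h

omit [DecidableEq V] in
/-- Appending paths that share only the junction. -/
lemma isPath_append {a b c : V} {p : H.Walk a b} {q : H.Walk b c} (hp : p.IsPath)
    (hq : q.IsPath) (h : ∀ x ∈ p.support, x ∈ q.support → x = b) :
    (p.append q).IsPath := by
  rw [Walk.isPath_def, Walk.support_append, List.nodup_append]
  have hqn := hq.support_nodup
  refine ⟨hp.support_nodup, ?_, ?_⟩
  · rw [Walk.support_eq_cons] at hqn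
    exact hqn.of_cons
  · intro x hx y hx' hxy
    subst hxy
    have hxq : x ∈ q.support := List.tail_subset _ hx'
    have hxb : x = b := h x hx hxq
    subst hxb
    rw [Walk.support_eq_cons] at hqn
    exact (List.nodup_cons.mp hqn).1 hx'

lemma reachable_of_nocut [Fintype V] (hcard : 3 ≤ Fintype.card V)
    (hcut : ∀ v : V, (H.induce ({v}ᶜ : Set V)).Connected) (a b : V) : H.Reachable a b := by
  rcases eq_or_ne a b with rfl | hab
  · exact Reachable.refl a
  obtain ⟨z, hz⟩ : ∃ z, z ∉ ({a, b} : Finset V) := by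
    by_contra h
    push_neg at h
    have h1 : (Finset.univ : Finset V) ⊆ {a, b} := fun x _ => h x
    have h2 := Finset.card_le_card h1
    have h3 : ({a, b} : Finset V).card ≤ 2 :=
      (Finset.card_insert_le _ _).trans (by simp)
    simp [Finset.card_univ] at h2
    omega
  simp only [Finset.mem_insert, Finset.mem_singleton, not_or] at hz
  obtain ⟨p, _, _⟩ := avoid_path (hcut z) (fun h => hz.1 h.symm) (fun h => hz.2 h.symm)
  exact ⟨p⟩

end WalkUtils

section Whitney

variable {V : Type*} [DecidableEq V] {H : SimpleGraph V}

lemma surgery {a b b' z : V} (hab : a ≠ b) (hbb' : b ≠ b') (hadj : H.Adj b' b)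
    (P1 P2 : H.Walk a b') (hP1 : P1.IsPath) (hP2 : P2.IsPath)
    (hint : ∀ x ∈ P1.support, x ∈ P2.support → x = a ∨ x = b')
    (Q0 : H.Walk b z) (hQ0 : Q0.IsPath) (hzP1 : z ∈ P1.support)
    (hQ0b' : b' ∉ Q0.support)
    (hQ0C : ∀ x ∈ Q0.support, (x ∈ P1.support ∨ x ∈ P2.support) → x = z) :
    ∃ R1 R2 : H.Walk a b, R1.IsPath ∧ R2.IsPath ∧
      ∀ x ∈ R1.support, x ∈ R2.support → x = a ∨ x = b := by
  have hzb' : z ≠ b' := fun h => hQ0b' (h ▸ Q0.end_mem_support)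
  have hbP2 : b ∉ P2.support := by
    intro hb2
    have hbz : b = z := hQ0C b Q0.start_mem_support (Or.inr hb2)
    have hbz1 : z ∈ P2.support := hbz ▸ hb2
    rcases hint z hzP1 hbz1 with h | h
    · exact hab (hbz.trans h).symm
    · exact hzb' h
  have hE : (Walk.cons hadj (Walk.nil : H.Walk b b)).IsPath := by
    rw [Walk.cons_isPath_iff]
    refine ⟨Walk.IsPath.nil, ?_⟩
    simp [hbb'.symm]
  have hR2 : (P2.append (Walk.cons hadj Walk.nil)).IsPath := by
    apply isPath_append hP2 hE
    intro x hx hxE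
    have hxE' : x = b' ∨ x = b := by simpa using hxE
    rcases hxE' with h | h
    · exact h
    · exact absurd (h ▸ hx) hbP2
  have hT := hP1.takeUntil hzP1
  have hmemT : ∀ x ∈ (P1.takeUntil z hzP1).support, x ∈ P1.support :=
    fun x hx => Walk.support_takeUntil_subset _ _ hx
  have hb'T : ∀ x ∈ (P1.takeUntil z hzP1).support, x ≠ b' := by
    intro x hx hxb'
    exact hzb' (end_eq_of_mem_takeUntil hP1 hzP1 (hxb' ▸ hx)).symm
  have hR1 : ((P1.takeUntil z hzP1).append Q0.reverse).IsPath := by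
    apply isPath_append hT hQ0.reverse
    intro x hx hxq
    have hxQ0 : x ∈ Q0.support := by rwa [Walk.support_reverse, List.mem_reverse] at hxq
    exact hQ0C x hxQ0 (Or.inl (hmemT x hx))
  refine ⟨(P1.takeUntil z hzP1).append Q0.reverse, P2.append (Walk.cons hadj Walk.nil),
    hR1, hR2, ?_⟩
  intro x hx1 hx2
  rw [Walk.mem_support_append_iff] at hx1 hx2
  have hx2' : x ∈ P2.support ∨ (x = b' ∨ x = b) := by
    rcases hx2 with h | h
    · exact Or.inl h
    · right; simpa using h
  rcases hx1 with hxT | hxQ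
  · rcases hx2' with hxP2 | hxE
    · rcases hint x (hmemT x hxT) hxP2 with h | h
      · exact Or.inl h
      · exact absurd h (hb'T x hxT)
    · rcases hxE with h | h
      · exact absurd h (hb'T x hxT)
      · exact Or.inr h
  · have hxQ0 : x ∈ Q0.support := by rwa [Walk.support_reverse, List.mem_reverse] at hxQ
    rcases hx2' with hxP2 | hxE
    · have hxz : x = z := hQ0C x hxQ0 (Or.inr hxP2)
      subst hxz
      rcases hint x hzP1 hxP2 with h | h
      · exact Or.inl h
      · exact absurd h hzb'
    · rcases hxE with h | h
      · exact absurd (h ▸ hxQ0) hQ0b'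
      · exact Or.inr h

theorem whitney [Fintype V] (hcard : 3 ≤ Fintype.card V)
    (hcut : ∀ v : V, (H.induce ({v}ᶜ : Set V)).Connected) :
    ∀ a b : V, a ≠ b → ∃ P1 P2 : H.Walk a b, P1.IsPath ∧ P2.IsPath ∧
      ∀ x ∈ P1.support, x ∈ P2.support → x = a ∨ x = b := by
  have hreach := reachable_of_nocut hcard hcut
  suffices main : ∀ n : ℕ, ∀ a b : V, a ≠ b → H.dist a b ≤ n →
      ∃ P1 P2 : H.Walk a b, P1.IsPath ∧ P2.IsPath ∧
        ∀ x ∈ P1.support, x ∈ P2.support → x = a ∨ x = b by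
    intro a b hab
    exact main (H.dist a b) a b hab le_rfl
  intro n
  induction n with
  | zero =>
    intro a b hab hd
    exact absurd (((hreach a b).dist_eq_zero_iff).mp (Nat.le_zero.mp hd)) hab
  | succ n ih =>
    intro a b hab hd
    by_cases hadj : H.Adj a b
    · have hP : (Walk.cons hadj (Walk.nil : H.Walk b b)).IsPath := by
        rw [Walk.cons_isPath_iff]
        exact ⟨Walk.IsPath.nil, by simp [hab]⟩
      refine ⟨_, _, hP, hP, ?_⟩
      intro x hx _
      simpa using hx
    · have hdne : H.dist a b ≠ 0 := fun h => hab (((hreach a b).dist_eq_zero_iff).mp h)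
      have hd1 : H.dist a b ≠ 1 := fun h => hadj (dist_eq_one_iff_adj.mp h)
      obtain ⟨p, hp⟩ := (hreach a b).exists_walk_length_eq_dist
      obtain ⟨q, hq⟩ : ∃ q : H.Walk b a, q.length = H.dist a b :=
        ⟨p.reverse, by rw [Walk.length_reverse, hp]⟩
      clear hp
      cases q with
      | nil => exact absurd rfl hab.symm
      | @cons _ b' _ hadj' r =>
        have hlen : r.length + 1 = H.dist a b := by simpa using hq
        have hab' : a ≠ b' := by
          rintro rfl
          exact hadj hadj'.symm
        have hbb' : b ≠ b' := hadj'.ne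
        have hd2 : 2 ≤ H.dist a b := by omega
        have hdist' : H.dist a b' ≤ n := by
          have h1 : H.dist a b' ≤ r.length := by
            have h2 := H.dist_le r.reverse
            rwa [Walk.length_reverse] at h2
          omega
        obtain ⟨P1, P2, hP1, hP2, hint⟩ := ih a b' hab' hdist'
        obtain ⟨Q, hQ, hQb'⟩ := avoid_path (hcut b') hbb' hab'
        have haC : a ∈ {x | x ∈ P1.support ∨ x ∈ P2.support} :=
          Set.mem_setOf_eq ▸ Or.inl P1.start_mem_support
        obtain ⟨z, hz, Q0, hQ0, hsub, hQ0C⟩ := exists_firstHit _ Q hQ haC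
        have hQ0b' : b' ∉ Q0.support := fun h => hQb' (hsub h)
        have hz' : z ∈ P1.support ∨ z ∈ P2.support := hz
        have hQ0C' : ∀ x ∈ Q0.support, (x ∈ P1.support ∨ x ∈ P2.support) → x = z :=
          fun x hx h => hQ0C x hx h
        rcases hz' with hz1 | hz2
        · exact surgery hab hbb' hadj'.symm P1 P2 hP1 hP2 hint Q0 hQ0 hz1 hQ0b' hQ0C'
        · exact surgery hab hbb' hadj'.symm P2 P1 hP2 hP1
            (fun x hx h => (hint x h hx).imp id id) Q0 hQ0 hz2 hQ0b'
            (fun x hx h => hQ0C' x hx h.symm)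
end Whitney

section Aug

open Sum

variable {V : Type*} [DecidableEq V]

@[simp] lemma mem_compl_singleton_iff {α : Type*} {x y : α} :
    x ∈ ({y}ᶜ : Set α) ↔ x ≠ y := by simp

/-- The auxiliary adjacency relation for the augmented graph. -/
def augAdj (G : SimpleGraph V) (a b c d : V) : V ⊕ Bool → V ⊕ Bool → Prop
  | Sum.inl x, Sum.inl y => G.Adj x y
  | Sum.inl x, Sum.inr true => x = a ∨ x = b
  | Sum.inl x, Sum.inr false => x = c ∨ x = d
  | Sum.inr true, Sum.inl x => x = a ∨ x = b
  | Sum.inr false, Sum.inl x => x = c ∨ x = d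
  | Sum.inr _, Sum.inr _ => False

/-- The augmented graph: add a vertex `inr true` joined to `a, b` and a vertex
`inr false` joined to `c, d`. -/
def aug (G : SimpleGraph V) (a b c d : V) : SimpleGraph (V ⊕ Bool) where
  Adj := augAdj G a b c d
  symm := by
    constructor
    rintro (x | i) (y | j) h
    · exact G.adj_symm h
    · cases j <;> exact h
    · cases i <;> exact h
    · cases i <;> cases j <;> exact h.elim
  loopless := by
    constructor
    rintro (x | i) h
    · exact G.irrefl h
    · cases i <;> exact h

variable {G : SimpleGraph V} {a b c d : V}

omit [DecidableEq V] in
lemma aug_adj_inl_inl {x y : V} : (aug G a b c d).Adj (inl x) (inl y) ↔ G.Adj x y := Iff.rfl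

lemma aug_nocut [Fintype V] (hcard : 3 ≤ Fintype.card V)
    (hcut : ∀ v : V, (G.induce ({v}ᶜ : Set V)).Connected)
    (hab : a ≠ b) (hcd : c ≠ d) :
    ∀ v' : V ⊕ Bool, ((aug G a b c d).induce ({v'}ᶜ : Set (V ⊕ Bool))).Connected := by
  have hreach := reachable_of_nocut hcard hcut
  rintro (v | i)
  · -- removed a vertex of V
    set s := ({Sum.inl v}ᶜ : Set (V ⊕ Bool)) with hs
    have hmem : ∀ x : V, x ≠ v → (Sum.inl x : V ⊕ Bool) ∈ s := by
      intro x hx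
      simp only [hs, mem_compl_singleton_iff]
      exact fun h => hx (Sum.inl.inj h)
    have hmemr : ∀ i : Bool, (Sum.inr i : V ⊕ Bool) ∈ s := by
      intro i
      simp [hs]
    set hubval : V := if a = v then b else a with hhubdef
    have hhubv : hubval ≠ v := by
      rw [hhubdef]; split_ifs with h
      · exact fun hbv => hab (h.trans hbv.symm)
      · exact h
    have hhubab : hubval = a ∨ hubval = b := by
      rw [hhubdef]; split_ifs
      · exact Or.inr rfl
      · exact Or.inl rfl
    let φ : (G.induce ({v}ᶜ : Set V)) →g ((aug G a b c d).induce s) :=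
      ⟨fun z => ⟨Sum.inl z.1, hmem z.1 (mem_compl_singleton_iff.mp z.2)⟩, fun h => h⟩
    have reach_inl : ∀ (x : V) (hx : x ≠ v),
        ((aug G a b c d).induce s).Reachable ⟨Sum.inl x, hmem x hx⟩
          ⟨Sum.inl hubval, hmem _ hhubv⟩ := by
      intro x hx
      have r := (hcut v).preconnected ⟨x, by simpa using hx⟩ ⟨hubval, by simpa using hhubv⟩
      exact r.map φ
    have hub_reach : ∀ u : ↥s, ((aug G a b c d).induce s).Reachable u
        ⟨Sum.inl hubval, hmem _ hhubv⟩ := by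
      rintro ⟨(x | i), hx⟩
      · exact reach_inl x (fun h => (mem_compl_singleton_iff.mp hx) (congrArg Sum.inl h))
      · cases i
        · -- inr false, joined to c, d
          have hev : (if c = v then d else c) ≠ v := by
            split_ifs with h
            · exact fun hdv => hcd (h.trans hdv.symm)
            · exact h
          have hecd : (if c = v then d else c) = c ∨ (if c = v then d else c) = d := by
            split_ifs
            · exact Or.inr rfl
            · exact Or.inl rfl
          have hadj : ((aug G a b c d).induce s).Adj ⟨Sum.inr false, hx⟩
              ⟨Sum.inl (if c = v then d else c), hmem _ hev⟩ := by
            show augAdj G a b c d (Sum.inr false) (Sum.inl _)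
            exact hecd
          exact hadj.reachable.trans (reach_inl _ hev)
        · -- inr true, joined to a, b; hubval ∈ {a,b}
          have hadj : ((aug G a b c d).induce s).Adj ⟨Sum.inr true, hx⟩
              ⟨Sum.inl hubval, hmem _ hhubv⟩ := by
            show augAdj G a b c d (Sum.inr true) (Sum.inl hubval)
            exact hhubab
          exact hadj.reachable
    haveI : Nonempty ↥s := ⟨⟨Sum.inl hubval, hmem _ hhubv⟩⟩
    exact ⟨fun u w => (hub_reach u).trans (hub_reach w).symm⟩
  · -- removed inr i
    set s := ({Sum.inr i}ᶜ : Set (V ⊕ Bool)) with hs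
    have hmeminl : ∀ x : V, (Sum.inl x : V ⊕ Bool) ∈ s := by
      intro x; simp [hs]
    let φ : G →g ((aug G a b c d).induce s) :=
      ⟨fun x => ⟨Sum.inl x, hmeminl x⟩, fun h => h⟩
    have ho : (Sum.inr (!i) : V ⊕ Bool) ∈ s := by
      simp only [hs, mem_compl_singleton_iff]
      intro h
      have := Sum.inr.inj h
      cases i <;> simp at this
    have reach_inl : ∀ x y : V,
        ((aug G a b c d).induce s).Reachable ⟨Sum.inl x, hmeminl x⟩ ⟨Sum.inl y, hmeminl y⟩ :=
      fun x y => (hreach x y).map φ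
    have reach_other : ((aug G a b c d).induce s).Reachable ⟨Sum.inr (!i), ho⟩
        ⟨Sum.inl a, hmeminl a⟩ := by
      cases i
      · have hadj : ((aug G a b c d).induce s).Adj ⟨Sum.inr (!false), ho⟩
            ⟨Sum.inl a, hmeminl a⟩ := by
          show augAdj G a b c d (Sum.inr true) (Sum.inl a)
          exact Or.inl rfl
        exact hadj.reachable
      · have hadj : ((aug G a b c d).induce s).Adj ⟨Sum.inr (!true), ho⟩
            ⟨Sum.inl c, hmeminl c⟩ := by
          show augAdj G a b c d (Sum.inr false) (Sum.inl c)
          exact Or.inl rfl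
        exact hadj.reachable.trans (reach_inl c a)
    have hub_reach : ∀ u : ↥s, ((aug G a b c d).induce s).Reachable u
        ⟨Sum.inl a, hmeminl a⟩ := by
      rintro ⟨(x | j), hx⟩
      · exact reach_inl x a
      · have hji : j = !i := by
          have h1 : (Sum.inr j : V ⊕ Bool) ≠ Sum.inr i := mem_compl_singleton_iff.mp hx
          have hji' : j ≠ i := fun h => h1 (congrArg Sum.inr h)
          cases i <;> cases j <;> simp_all
        subst hji
        exact reach_other
    haveI : Nonempty ↥s := ⟨⟨Sum.inl a, hmeminl a⟩⟩
    exact ⟨fun u w => (hub_reach u).trans (hub_reach w).symm⟩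

end Aug

section Menger

open Sum

variable {V : Type*} [DecidableEq V] {G : SimpleGraph V} {a b c d : V}

/-- Trim the final edge off a path ending at `inr false`. -/
lemma aug_last {p q : V ⊕ Bool} (W : (aug G a b c d).Walk p q) :
    W.IsPath → q = Sum.inr false → (Sum.inr true) ∉ W.support → p ≠ Sum.inr false →
      ∃ y, (y = c ∨ y = d) ∧ ∃ M : (aug G a b c d).Walk p (Sum.inl y), M.IsPath ∧
        M.support ⊆ W.support ∧ (Sum.inr false) ∉ M.support ∧ (Sum.inr true) ∉ M.support := by
  induction W with
  | nil =>
    intro _ hq _ hne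
    exact absurd hq hne
  | @cons u s q' hadj rest ih =>
    intro hW hq ht hne
    subst hq
    have hut : u ≠ Sum.inr true := fun h => ht (h ▸ Walk.start_mem_support _)
    by_cases hs : s = Sum.inr false
    · subst hs
      rcases u with x | i
      · have hycd : x = c ∨ x = d := hadj
        refine ⟨x, hycd, Walk.nil, Walk.IsPath.nil, ?_, by simp, by simp⟩
        intro t htt
        simp only [Walk.support_nil, List.mem_singleton] at htt
        subst htt
        exact Walk.start_mem_support _
      · cases i
        · exact absurd rfl hne
        · exact absurd rfl hut
    · have hW' := hW.of_cons
      have ht' : Sum.inr true ∉ rest.support := by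
        intro h
        exact ht (by rw [Walk.support_cons]; exact List.mem_cons_of_mem _ h)
      obtain ⟨y, hy, M, hM, hMsub, hMf, hMt⟩ := ih hW' rfl ht' hs
      have huM : u ∉ M.support := fun h =>
        ((Walk.cons_isPath_iff _ _).mp hW).2 (hMsub h)
      refine ⟨y, hy, Walk.cons hadj M, hM.cons huM, ?_, ?_, ?_⟩
      · intro t htt
        rw [Walk.support_cons] at htt ⊢
        rcases List.mem_cons.mp htt with h | h
        · exact h ▸ List.mem_cons_self
        · exact List.mem_cons_of_mem _ (hMsub h)
      · rw [Walk.support_cons]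
        intro h
        rcases List.mem_cons.mp h with h | h
        · exact hne h.symm
        · exact hMf h
      · rw [Walk.support_cons]
        intro h
        rcases List.mem_cons.mp h with h | h
        · exact hut h.symm
        · exact hMt h

/-- Pull an `inl`-only walk in the augmented graph back to `G`. -/
lemma aug_pull {p q : V ⊕ Bool} (M : (aug G a b c d).Walk p q) :
    (Sum.inr false) ∉ M.support → (Sum.inr true) ∉ M.support →
      ∀ {x y : V}, p = Sum.inl x → q = Sum.inl y →
      ∃ m : G.Walk x y, m.support.map Sum.inl = M.support := by
  induction M with
  | nil =>
    intro _ _ x y hp hq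
    subst hp
    obtain rfl : x = y := Sum.inl.inj hq
    exact ⟨Walk.nil, by simp⟩
  | @cons u s q' hadj rest ih =>
    intro hf ht x y hp hq
    subst hp
    obtain ⟨u', hu⟩ : ∃ u' : V, s = Sum.inl u' := by
      rcases s with u' | i
      · exact ⟨u', rfl⟩
      · exfalso
        have hmem : Sum.inr i ∈ (Walk.cons hadj rest).support := by
          rw [Walk.support_cons]
          exact List.mem_cons_of_mem _ (Walk.start_mem_support _)
        cases i
        · exact hf hmem
        · exact ht hmem
    subst hu
    have hf' : Sum.inr false ∉ rest.support := fun h =>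
      hf (by rw [Walk.support_cons]; exact List.mem_cons_of_mem _ h)
    have ht' : Sum.inr true ∉ rest.support := fun h =>
      ht (by rw [Walk.support_cons]; exact List.mem_cons_of_mem _ h)
    obtain ⟨m, hm⟩ := ih hf' ht' rfl hq
    exact ⟨Walk.cons (show G.Adj x u' from hadj) m, by
      rw [Walk.support_cons, Walk.support_cons, ← hm, List.map_cons]⟩

/-- Extract a `G`-linkage from a `p`–`q` path in the augmented graph. -/
lemma aug_trim (P : (aug G a b c d).Walk (Sum.inr true) (Sum.inr false))
    (hP : P.IsPath) :
    ∃ x y, (x = a ∨ x = b) ∧ (y = c ∨ y = d) ∧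
      ∃ m : G.Walk x y, m.IsPath ∧ ∀ t ∈ m.support, Sum.inl t ∈ P.support := by
  cases P with
  | @cons _ s _ hadj rest =>
    obtain ⟨x, hx⟩ : ∃ x : V, s = Sum.inl x := by
      rcases s with x | i
      · exact ⟨x, rfl⟩
      · exact absurd hadj (by cases i <;> exact fun h => h)
    subst hx
    have hxab : x = a ∨ x = b := hadj
    have hrest := hP.of_cons
    have hpt : Sum.inr true ∉ rest.support := ((Walk.cons_isPath_iff _ _).mp hP).2
    obtain ⟨y, hy, M, hM, hMsub, hMf, hMt⟩ := aug_last rest hrest rfl hpt (by simp)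
    obtain ⟨m, hm⟩ := aug_pull M hMf hMt rfl rfl
    have hmpath : m.IsPath := by
      rw [Walk.isPath_def]
      have := hM.support_nodup
      rw [← hm] at this
      exact this.of_map
    refine ⟨x, y, hxab, hy, m, hmpath, ?_⟩
    intro t ht
    have : Sum.inl t ∈ M.support := by
      rw [← hm]
      exact List.mem_map_of_mem ht
    rw [Walk.support_cons]
    exact List.mem_cons_of_mem _ (hMsub this)

theorem menger2 [Fintype V] (hcard : 3 ≤ Fintype.card V)
    (hcut : ∀ v : V, (G.induce ({v}ᶜ : Set V)).Connected)
    (hab : a ≠ b) (hcd : c ≠ d) :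
    IsLinkage G a c b d ∨ IsLinkage G a d b c := by
  have hnc := aug_nocut (G := G) (a := a) (b := b) (c := c) (d := d) hcard hcut hab hcd
  have hcard' : 3 ≤ Fintype.card (V ⊕ Bool) := by
    rw [Fintype.card_sum]
    omega
  have hne : (Sum.inr true : V ⊕ Bool) ≠ Sum.inr false := by simp
  obtain ⟨P1, P2, hP1, hP2, hint⟩ := whitney hcard' hnc (Sum.inr true) (Sum.inr false) hne
  obtain ⟨x1, y1, hx1, hy1, m1, hm1, hm1s⟩ := aug_trim P1 hP1
  obtain ⟨x2, y2, hx2, hy2, m2, hm2, hm2s⟩ := aug_trim P2 hP2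
  have hdisj : ∀ t ∈ m1.support, t ∉ m2.support := by
    intro t ht1 ht2
    rcases hint _ (hm1s t ht1) (hm2s t ht2) with h | h <;> simp at h
  have hx12 : x1 ≠ x2 := by
    rintro rfl
    exact hdisj x1 m1.start_mem_support m2.start_mem_support
  have hy12 : y1 ≠ y2 := by
    rintro rfl
    exact hdisj y1 m1.end_mem_support m2.end_mem_support
  have hdisj' : ∀ t ∈ m2.support, t ∉ m1.support := fun t h2 h1 => hdisj t h1 h2
  rcases hx1 with rfl | rfl <;> rcases hx2 with rfl | rfl
  · exact absurd rfl hx12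
  · -- x1 = a, x2 = b
    rcases hy1 with rfl | rfl <;> rcases hy2 with rfl | rfl
    · exact absurd rfl hy12
    · exact Or.inl ⟨m1, m2, hm1, hm2, hdisj⟩
    · exact Or.inr ⟨m1, m2, hm1, hm2, hdisj⟩
    · exact absurd rfl hy12
  · -- x1 = b, x2 = a
    rcases hy1 with rfl | rfl <;> rcases hy2 with rfl | rfl
    · exact absurd rfl hy12
    · exact Or.inr ⟨m2, m1, hm2, hm1, hdisj'⟩
    · exact Or.inl ⟨m2, m1, hm2, hm1, hdisj'⟩
    · exact absurd rfl hy12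
  · exact absurd rfl hx12

end Menger

section Assembly

variable {V : Type*} [DecidableEq V] {G : SimpleGraph V}

lemma IsLinkage.rev1 {a b c d : V} (h : IsLinkage G a b c d) : IsLinkage G b a c d := by
  obtain ⟨P, Q, hP, hQ, hdisj⟩ := h
  refine ⟨P.reverse, Q, hP.reverse, hQ, fun x hx => hdisj x ?_⟩
  rwa [SimpleGraph.Walk.support_reverse, List.mem_reverse] at hx

lemma IsLinkage.rev2 {a b c d : V} (h : IsLinkage G a b c d) : IsLinkage G a b d c := by
  obtain ⟨P, Q, hP, hQ, hdisj⟩ := h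
  refine ⟨P, Q.reverse, hP, hQ.reverse, fun x hx hx2 => hdisj x hx ?_⟩
  rwa [SimpleGraph.Walk.support_reverse, List.mem_reverse] at hx2

lemma IsLinkage.swap {a b c d : V} (h : IsLinkage G a b c d) : IsLinkage G c d a b := by
  obtain ⟨P, Q, hP, hQ, hdisj⟩ := h
  exact ⟨Q, P, hQ, hP, fun x hx hx2 => hdisj x hx2 hx⟩

lemma linkage_mem {R S : Finset V} {a b c d : V} (ha : a ∈ R) (hb : b ∈ R) (hc : c ∈ S)
    (hd : d ∈ S) (h : IsLinkage G a b c d) : cPair a b c d ∈ PSpan G R S :=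
  Submodule.subset_span ⟨a, b, c, d, ha, hb, hc, hd, h, rfl⟩

lemma endgame_S {R S : Finset V} {a b c w : V}
    (haR : a ∈ R) (hbR : b ∈ R) (hcR : c ∈ R)
    (haS : a ∈ S) (hbS : b ∈ S) (hcS : c ∈ S) (hwS : w ∈ S)
    (h1 : IsLinkage G a c b w) (h2 : IsLinkage G b c a w) :
    cTriple a b c + cPair a b c w ∈ PSpan G R S := by
  have g1 : cPair a c b w ∈ PSpan G R S := linkage_mem haR hcR hbS hwS h1
  have g2 : cPair b c a w ∈ PSpan G R S := linkage_mem hbR hcR haS hwS h2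
  rw [A1]
  exact Submodule.sub_mem _ g1 g2

lemma endgame_R {R S : Finset V} {a b c w : V}
    (haR : a ∈ R) (hbR : b ∈ R) (hwR : w ∈ R)
    (haS : a ∈ S) (hbS : b ∈ S) (hcS : c ∈ S)
    (h1 : IsLinkage G a w b c) (h2 : IsLinkage G b w a c) :
    cTriple a b c + cPair c w b a ∈ PSpan G R S := by
  have g1 : cPair a w b c ∈ PSpan G R S := linkage_mem haR hwR hbS hcS h1
  have g2 : cPair b w a c ∈ PSpan G R S := linkage_mem hbR hwR haS hcS h2
  rw [A2]
  exact Submodule.sub_mem _ g1 g2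

end Assembly

lemma pair_not_mem {V : Type*} {M : Submodule ℤ (TT V)} {x y : TT V}
    (hnot : x ∉ M) (hmem : x + y ∈ M) : y ∉ M := by
  intro hy
  have h2 := M.sub_mem hmem hy
  rw [add_sub_cancel_right] at h2
  exact hnot h2



theorem stmt5 {V : Type*} [Fintype V] [DecidableEq V] (G : SimpleGraph V)
    (R S : Finset V) (hG : TwoConnected G) (hcard : 4 ≤ (R ∪ S).card)
    (u1 u2 u3 : V) (hu1 : u1 ∈ R ∩ S) (hu2 : u2 ∈ R ∩ S) (hu3 : u3 ∈ R ∩ S)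
    (h12 : u1 ≠ u2) (h13 : u1 ≠ u3) (h23 : u2 ≠ u3)
    (hnot : cTriple u1 u2 u3 ∉ PSpan G R S) :
    ∃ u4 u5 v1 v2 : V, u4 ∈ R ∧ u5 ∈ R ∧ v1 ∈ S ∧ v2 ∈ S ∧ u4 ≠ u5 ∧ v1 ≠ v2 ∧
      cPair u4 u5 v1 v2 ∉ PSpan G R S ∧
      cTriple u1 u2 u3 + cPair u4 u5 v1 v2 ∈ PSpan G R S := by
  obtain ⟨hcard3, hcut⟩ := hG
  obtain ⟨hu1R, hu1S⟩ := Finset.mem_inter.mp hu1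
  obtain ⟨hu2R, hu2S⟩ := Finset.mem_inter.mp hu2
  obtain ⟨hu3R, hu3S⟩ := Finset.mem_inter.mp hu3
  -- find a fourth vertex w in R ∪ S
  obtain ⟨w, hwRS, hwu⟩ : ∃ w ∈ R ∪ S, w ∉ ({u1, u2, u3} : Finset V) := by
    by_contra hcon
    push_neg at hcon
    have hsub : R ∪ S ⊆ {u1, u2, u3} := fun x hx => hcon x hx
    have hle := Finset.card_le_card hsub
    have h3 : ({u1, u2, u3} : Finset V).card ≤ 3 := by
      apply le_trans (Finset.card_insert_le _ _)
      apply Nat.succ_le_succ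
      apply le_trans (Finset.card_insert_le _ _)
      simp
    omega
  simp only [Finset.mem_insert, Finset.mem_singleton, not_or] at hwu
  obtain ⟨hw1, hw2, hw3⟩ := hwu
  -- the three Menger applications
  have hw3' : u3 ≠ w := fun h => hw3 h.symm
  have hw2' : u2 ≠ w := fun h => hw2 h.symm
  have hw1' : u1 ≠ w := fun h => hw1 h.symm
  have M1 := menger2 (G := G) hcard3 hcut h12 hw3'
  have M2 := menger2 (G := G) hcard3 hcut h13 hw2'
  have M3 := menger2 (G := G) hcard3 hcut h23 hw1'
  -- canonical pairings
  have key : (IsLinkage G u1 u3 u2 w ∧ IsLinkage G u2 u3 u1 w) ∨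
      (IsLinkage G u1 u2 u3 w ∧ IsLinkage G u1 u3 u2 w) ∨
      (IsLinkage G u2 u3 u1 w ∧ IsLinkage G u1 u2 u3 w) := by
    have Q1or2 : IsLinkage G u1 u3 u2 w ∨ IsLinkage G u2 u3 u1 w := by
      rcases M1 with h | h
      · exact Or.inl h
      · exact Or.inr h.swap
    have Q3or1 : IsLinkage G u1 u2 u3 w ∨ IsLinkage G u2 u3 u1 w := by
      rcases M2 with h | h
      · exact Or.inl h
      · exact Or.inr h.swap.rev1
    have Q3or2 : IsLinkage G u1 u2 u3 w ∨ IsLinkage G u1 u3 u2 w := by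
      rcases M3 with h | h
      · exact Or.inl h.rev1
      · exact Or.inr h.swap.rev1
    rcases Q1or2 with h2 | h1
    · rcases Q3or1 with h3 | h1
      · exact Or.inr (Or.inl ⟨h3, h2⟩)
      · exact Or.inl ⟨h2, h1⟩
    · rcases Q3or2 with h3 | h2
      · exact Or.inr (Or.inr ⟨h1, h3⟩)
      · exact Or.inl ⟨h2, h1⟩
  have hmemw : w ∈ R ∨ w ∈ S := Finset.mem_union.mp hwRS
  -- the six cases
  rcases hmemw with hwR | hwS
  · -- w ∈ R : use endgame_R
    rcases key with ⟨hQ2, hQ1⟩ | ⟨hQ3, hQ2⟩ | ⟨hQ1, hQ3⟩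
    · -- (a,b,c) = (u1,u2,u3)
      have h1 : IsLinkage G u1 w u2 u3 := hQ1.swap
      have h2 : IsLinkage G u2 w u1 u3 := hQ2.swap
      have mem := endgame_R (G := G) hu1R hu2R hwR hu1S hu2S hu3S h1 h2
      refine ⟨u3, w, u2, u1, hu3R, hwR, hu2S, hu1S, fun h => hw3 h.symm, h12.symm, ?_, mem⟩
      · exact pair_not_mem hnot mem
    · -- (a,b,c) = (u2,u3,u1)
      have h1 : IsLinkage G u2 w u3 u1 := hQ2.swap.rev2
      have h2 : IsLinkage G u3 w u2 u1 := hQ3.swap.rev2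
      have mem := endgame_R (G := G) hu2R hu3R hwR hu2S hu3S hu1S h1 h2
      rw [← cTriple_rot] at mem
      refine ⟨u1, w, u3, u2, hu1R, hwR, hu3S, hu2S, fun h => hw1 h.symm, h23.symm, ?_, mem⟩
      · exact pair_not_mem hnot mem
    · -- (a,b,c) = (u3,u1,u2)
      have h1 : IsLinkage G u3 w u1 u2 := hQ3.swap
      have h2 : IsLinkage G u1 w u3 u2 := hQ1.swap.rev2
      have mem := endgame_R (G := G) hu3R hu1R hwR hu3S hu1S hu2S h1 h2
      rw [← cTriple_rot, ← cTriple_rot] at mem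
      refine ⟨u2, w, u1, u3, hu2R, hwR, hu1S, hu3S, fun h => hw2 h.symm, h13, ?_, mem⟩
      · exact pair_not_mem hnot mem
  · -- w ∈ S : use endgame_S
    rcases key with ⟨hQ2, hQ1⟩ | ⟨hQ3, hQ2⟩ | ⟨hQ1, hQ3⟩
    · -- (a,b,c) = (u1,u2,u3)
      have mem := endgame_S (G := G) hu1R hu2R hu3R hu1S hu2S hu3S hwS hQ2 hQ1
      refine ⟨u1, u2, u3, w, hu1R, hu2R, hu3S, hwS, h12, fun h => hw3 h.symm, ?_, mem⟩
      · exact pair_not_mem hnot mem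
    · -- (a,b,c) = (u2,u3,u1)
      have h1 : IsLinkage G u2 u1 u3 w := hQ3.rev1
      have h2 : IsLinkage G u3 u1 u2 w := hQ2.rev1
      have mem := endgame_S (G := G) hu2R hu3R hu1R hu2S hu3S hu1S hwS h1 h2
      rw [← cTriple_rot] at mem
      refine ⟨u2, u3, u1, w, hu2R, hu3R, hu1S, hwS, h23, fun h => hw1 h.symm, ?_, mem⟩
      · exact pair_not_mem hnot mem
    · -- (a,b,c) = (u3,u1,u2)
      have h1 : IsLinkage G u3 u2 u1 w := hQ1.rev1
      have h2 : IsLinkage G u1 u2 u3 w := hQ3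
      have mem := endgame_S (G := G) hu3R hu1R hu2R hu3S hu1S hu2S hwS h1 h2
      rw [← cTriple_rot, ← cTriple_rot] at mem
      refine ⟨u3, u1, u2, w, hu3R, hu1R, hu2S, hwS, h13.symm, fun h => hw2 h.symm, ?_, mem⟩
      · exact pair_not_mem hnot mem
end
end
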